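/- arXiv:gr-qc/9906037 — 6 statements merged into one kernel-verified Lean document; each statement's English description precedes it below -/
import Mathlib

section
/- Let G be a Hausdorff topological group acting continuously on a locally compact Hausdorff topological space X. Then the action is proper if and only if for every compact subset K of X, the set {g ∈ G : (g • K) ∩ K ≠ ∅} is a compact subset of G. -/
open Pointwise

/-! A point `(g, x)` lies over `K ×ˢ K` exactly when `g` moves `x ∈ K` back into `K`, so the
preimage of `K ×ˢ K` under `(g, x) ↦ (g • x, x)` sits in `{g | g • K ∩ K ≠ ∅} ×ˢ K` and projects
onto `{g | g • K ∩ K ≠ ∅}`. Properness thus gives compactness of that set; conversely every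
compact `L ⊆ X × X` lies in `K ×ˢ K` for the compact `K = pr₁ L ∪ pr₂ L`, so its preimage is a
closed subset of a compact set. Local compactness of `X` is what lets compact preimages imply
properness. -/

section

variable {G X : Type*} [SMul G X]

theorem preimage_smul_pair_prod_subset (U V : Set X) :
    (fun p : G × X => (p.1 • p.2, p.2)) ⁻¹' (U ×ˢ V) ⊆ {g : G | (g • V ∩ U).Nonempty} ×ˢ V :=
  fun _ ⟨hgx, hx⟩ => ⟨⟨_, Set.smul_mem_smul_set hx, hgx⟩, hx⟩

theorem isProperMap_smul_pair_of_isCompact_setOf_smul_inter_nonempty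
    [TopologicalSpace G] [TopologicalSpace X] [ContinuousSMul G X]
    [T2Space X] [CompactlyCoherentSpace (X × X)]
    (h : ∀ K : Set X, IsCompact K → IsCompact {g : G | (g • K ∩ K).Nonempty}) :
    IsProperMap (fun p : G × X => (p.1 • p.2, p.2)) := by
  refine isProperMap_iff_isCompact_preimage.2 ⟨by fun_prop, fun L hL => ?_⟩
  set K := Prod.fst '' L ∪ Prod.snd '' L
  have hK : IsCompact K := (hL.image continuous_fst).union (hL.image continuous_snd)
  have hLK : L ⊆ K ×ˢ K := fun p hp => ⟨.inl ⟨p, hp, rfl⟩, .inr ⟨p, hp, rfl⟩⟩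
  exact ((h K hK).prod hK).of_isClosed_subset (hL.isClosed.preimage (by fun_prop))
    ((Set.preimage_mono hLK).trans (preimage_smul_pair_prod_subset K K))

end

theorem proper_action_iff_compact_transporter_general
    {G X : Type*} [Group G] [TopologicalSpace G]
    [TopologicalSpace X] [LocallyCompactSpace X] [T2Space X]
    [MulAction G X] [ContinuousSMul G X] :
    IsProperMap (fun p : G × X => (p.1 • p.2, p.2)) ↔
      ∀ K : Set X, IsCompact K → IsCompact {g : G | (g • K) ∩ K ≠ ∅} := by
  simp_rw [← Set.nonempty_iff_ne_empty]
  refine ⟨fun h K hK => ?_, isProperMap_smul_pair_of_isCompact_setOf_smul_inter_nonempty⟩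
  have : ProperSMul G X := ⟨h⟩
  exact ProperSMul.isCompact_setOfPred_inter_nonempty hK hK

/-- Let `G` be a Hausdorff topological group acting continuously on a
locally compact Hausdorff topological space `X`. Then the action is proper (i.e. the map
`G × X → X × X`, `(g, x) ↦ (g • x, x)`, is a proper map) if and only if for every compact
subset `K` of `X`, the set `{g ∈ G : (g • K) ∩ K ≠ ∅}` is a compact subset of `G`. -/
theorem proper_action_iff_compact_transporter
    {G X : Type*} [Group G] [TopologicalSpace G] [IsTopologicalGroup G] [T2Space G]
    [TopologicalSpace X] [LocallyCompactSpace X] [T2Space X]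
    [MulAction G X] [ContinuousSMul G X] :
    IsProperMap (fun p : G × X => (p.1 • p.2, p.2)) ↔
      ∀ K : Set X, IsCompact K → IsCompact {g : G | (g • K) ∩ K ≠ ∅} :=
  proper_action_iff_compact_transporter_general
end

section
/- Let G be a metrizable topological group acting continuously on a locally compact metric space X. Then the action fails to be proper if and only if there exist a sequence (xₙ) in X converging to some x ∈ X and a sequence (gₙ) in G having no convergent subsequence, such that the sequence (gₙ • xₙ) converges in X. -/
open Filter Topology

/-!
On metrizable spaces compactness is sequential compactness, so a continuous map `f` into a
Hausdorff first-countable space is proper exactly when every sequence `uₙ` with `f uₙ`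
convergent has a convergent subsequence. For `(g, x) ↦ (g • x, x)` the image of `(gₙ, xₙ)`
converges iff `xₙ` and `gₙ • xₙ` do, and once `xₙ` converges a subsequence of `(gₙ, xₙ)`
converges iff the corresponding subsequence of `gₙ` does.
-/

def HasConvergentSubseq {α : Type*} [TopologicalSpace α] (u : ℕ → α) : Prop :=
  ∃ (φ : ℕ → ℕ) (a : α), StrictMono φ ∧ Tendsto (u ∘ φ) atTop (𝓝 a)

theorem hasConvergentSubseq_prodMk_iff {α β : Type*} [TopologicalSpace α] [TopologicalSpace β]
    {u : ℕ → α} {v : ℕ → β} {b : β} (hv : Tendsto v atTop (𝓝 b)) :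
    HasConvergentSubseq (fun n => (u n, v n)) ↔ HasConvergentSubseq u := by
  constructor
  · rintro ⟨φ, a, hφ, ha⟩
    exact ⟨φ, a.1, hφ, (continuous_fst.tendsto a).comp ha⟩
  · rintro ⟨φ, a, hφ, ha⟩
    exact ⟨φ, (a, b), hφ, ha.prodMk_nhds (hv.comp hφ.tendsto_atTop)⟩

theorem isProperMap_iff_forall_hasConvergentSubseq {α β : Type*} [TopologicalSpace α]
    [TopologicalSpace.PseudoMetrizableSpace α] [TopologicalSpace β] [T2Space β]
    [FirstCountableTopology β] {f : α → β} (hf : Continuous f) :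
    IsProperMap f ↔
      ∀ (u : ℕ → α) (y : β), Tendsto (f ∘ u) atTop (𝓝 y) → HasConvergentSubseq u := by
  constructor
  · intro hp u y hy
    have hK := hp.isCompact_preimage hy.isCompact_insert_range
    obtain ⟨a, -, φ, hφ, ha⟩ := hK.tendsto_subseq fun n => Set.mem_insert_of_mem _ ⟨n, rfl⟩
    exact ⟨φ, a, hφ, ha⟩
  · refine fun h => isProperMap_iff_isCompact_preimage.2 ⟨hf, fun K hK => ?_⟩
    refine IsSeqCompact.isCompact fun u hu => ?_
    obtain ⟨y, -, φ, hφ, hy⟩ := hK.tendsto_subseq hu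
    obtain ⟨ψ, a, hψ, ha⟩ := h (u ∘ φ) y hy
    have hclosed : IsClosed (f ⁻¹' K) := hK.isClosed.preimage hf
    exact ⟨a, hclosed.mem_of_tendsto ha (Eventually.of_forall fun n => hu _), φ ∘ ψ,
      hφ.comp hψ, ha⟩

theorem not_proper_action_iff_exists_seq_general
    {G X : Type*} [Group G] [TopologicalSpace G]
    [TopologicalSpace.MetrizableSpace G]
    [MetricSpace X]
    [MulAction G X] [ContinuousSMul G X] :
    ¬ IsProperMap (fun p : G × X => (p.1 • p.2, p.2)) ↔
      ∃ (x : ℕ → X) (x₀ : X) (g : ℕ → G),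
        Tendsto x atTop (𝓝 x₀) ∧
        (¬ ∃ (φ : ℕ → ℕ) (g₀ : G), StrictMono φ ∧ Tendsto (g ∘ φ) atTop (𝓝 g₀)) ∧
        ∃ y : X, Tendsto (fun n => g n • x n) atTop (𝓝 y) := by
  rw [isProperMap_iff_forall_hasConvergentSubseq (by fun_prop)]
  constructor
  · intro h
    push Not at h
    obtain ⟨u, ⟨y, x₀⟩, hu, hno⟩ := h
    have hx : Tendsto (Prod.snd ∘ u) atTop (𝓝 x₀) := (continuous_snd.tendsto _).comp hu
    refine ⟨Prod.snd ∘ u, x₀, Prod.fst ∘ u, hx, fun hg => hno ?_, y,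
      (continuous_fst.tendsto _).comp hu⟩
    exact (hasConvergentSubseq_prodMk_iff hx).2 hg
  · rintro ⟨x, x₀, g, hx, hg, y, hy⟩ h
    exact hg ((hasConvergentSubseq_prodMk_iff hx).1 (h _ (y, x₀) (hy.prodMk_nhds hx)))

/-- Let `G` be a metrizable topological group acting continuously on a
locally compact metric space `X`. Then the action fails to be proper (where proper means
that `(g, x) ↦ (g • x, x)` is a proper map) if and only if there exist a sequence `xₙ`
in `X` converging to some `x ∈ X` and a sequence `gₙ` in `G` having no convergent
subsequence, such that the sequence `gₙ • xₙ` converges in `X`. -/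
theorem not_proper_action_iff_exists_seq
    {G X : Type*} [Group G] [TopologicalSpace G] [IsTopologicalGroup G]
    [TopologicalSpace.MetrizableSpace G]
    [MetricSpace X] [LocallyCompactSpace X]
    [MulAction G X] [ContinuousSMul G X] :
    ¬ IsProperMap (fun p : G × X => (p.1 • p.2, p.2)) ↔
      ∃ (x : ℕ → X) (x₀ : X) (g : ℕ → G),
        Tendsto x atTop (𝓝 x₀) ∧
        (¬ ∃ (φ : ℕ → ℕ) (g₀ : G), StrictMono φ ∧ Tendsto (g ∘ φ) atTop (𝓝 g₀)) ∧
        ∃ y : X, Tendsto (fun n => g n • x n) atTop (𝓝 y) :=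
  not_proper_action_iff_exists_seq_general
end

section
/- Let G be a locally compact Hausdorff topological group acting properly and continuously on a locally compact, σ-compact, metrizable topological space X. Then there exists a distance function d on X inducing the topology of X that is G-invariant, i.e. d(g • x, g • y) = d(x, y) for all g ∈ G and x, y ∈ X. -/
/-!
Pick countably many compactly supported functions `fᵢ : X → ℝ` whose supports form a basis of
`X`, and send `x` to the orbit profiles `g ↦ fᵢ (g • x)`, viewed in the sup metric on bounded
continuous functions on `G`. Translating `x` by `h` only reparametrises `g ↦ g * h`, so sup
distances between profiles are `G`-invariant. Properness gives continuity: near `x`, only a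
compact set of `g` can move points into the support of `fᵢ`, so the profiles vary uniformly.
Evaluating at `g = 1` recovers the `fᵢ`, so these maps together embed `X` into a countable
product of metric spaces, and the product metric pulls back to an invariant metric on `X`.
-/

open Set Function Filter Topology TopologicalSpace
open scoped CompactlySupported BoundedContinuousFunction

universe u

theorem TopologicalSpace.IsTopologicalBasis.exists_isCompact_closure_subset
    {X : Type*} [TopologicalSpace X] [LocallyCompactSpace X] [RegularSpace X]
    {B : Set (Set X)} (hB : IsTopologicalBasis B) {x : X} {V : Set X} (hV : IsOpen V)
    (hx : x ∈ V) :
    ∃ U₁ ∈ B, ∃ U₂ ∈ B, x ∈ U₁ ∧ IsCompact (closure U₁) ∧ closure U₁ ⊆ U₂ ∧ U₂ ⊆ V := by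
  obtain ⟨U₂, hU₂B, hxU₂, hU₂V⟩ := hB.exists_subset_of_mem_open hx hV
  obtain ⟨L, hLc, hLcl, hxL, hLU₂⟩ := exists_compact_closed_between isCompact_singleton
    (hB.isOpen hU₂B) (singleton_subset_iff.2 hxU₂)
  obtain ⟨U₁, hU₁B, hxU₁, hU₁L⟩ := hB.exists_subset_of_mem_open (hxL rfl) isOpen_interior
  have hcl : closure U₁ ⊆ L := closure_minimal (hU₁L.trans interior_subset) hLcl
  exact ⟨U₁, hU₁B, U₂, hU₂B, hxU₁, hLc.of_isClosed_subset isClosed_closure hcl,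
    hcl.trans hLU₂, hU₂V⟩

theorem exists_countable_compactlySupported_support_basis (X : Type u) [TopologicalSpace X]
    [SecondCountableTopology X] [LocallyCompactSpace X] [RegularSpace X] :
    ∃ (ι : Type u) (_ : Countable ι) (F : ι → C_c(X, ℝ)),
      IsTopologicalBasis (range fun i => support (F i)) := by
  have hB := isBasis_countableBasis X
  let P : Set (Set X × Set X) := {p | p.1 ∈ countableBasis X ∧ p.2 ∈ countableBasis X ∧
    IsCompact (closure p.1) ∧ closure p.1 ⊆ p.2}
  have hP : P.Countable := ((countable_countableBasis X).prod (countable_countableBasis X)).mono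
    fun _ hp => show _ ∈ _ ×ˢ _ from ⟨hp.1, hp.2.1⟩
  have := hP.to_subtype
  have urysohn (p : P) : ∃ f : C_c(X, ℝ), EqOn f 1 (closure p.1.1) ∧ support f ⊆ p.1.2 := by
    obtain ⟨f, hf1, hf0, hfc, -⟩ := exists_continuous_one_zero_of_isCompact p.2.2.2.1
      (hB.isOpen p.2.2.1).isClosed_compl (disjoint_compl_right_iff_subset.2 p.2.2.2.2)
    exact ⟨⟨f, hfc⟩, hf1, fun y hy => by_contra fun hy' => hy (hf0 hy')⟩
  choose F hF1 hF0 using urysohn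
  refine ⟨P, inferInstance, F, isTopologicalBasis_of_isOpen_of_nhds ?_ fun x V hx hV => ?_⟩
  · rintro _ ⟨p, rfl⟩
    exact (F p).continuous.isOpen_support
  obtain ⟨U₁, hU₁, U₂, hU₂, hxU₁, hU₁c, hU₁₂, hU₂V⟩ := hB.exists_isCompact_closure_subset hV hx
  let p : P := ⟨(U₁, U₂), hU₁, hU₂, hU₁c, hU₁₂⟩
  refine ⟨support (F p), ⟨p, rfl⟩, ?_, (hF0 p).trans hU₂V⟩
  simp [mem_support, hF1 p (subset_closure hxU₁)]

theorem isInducing_pi_of_isTopologicalBasis_support {X ι M : Type*} [TopologicalSpace X]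
    [TopologicalSpace M] [Zero M] [T1Space M] {F : ι → X → M} (hF : ∀ i, Continuous (F i))
    (hb : IsTopologicalBasis (range fun i => support (F i))) :
    IsInducing fun x i => F i x := by
  refine isInducing_iff_nhds.2 fun x => le_antisymm ((continuous_pi hF).tendsto x).le_comap ?_
  intro V hV
  obtain ⟨_, ⟨i, rfl⟩, hxi, hiV⟩ := hb.mem_nhds_iff.1 hV
  exact mem_comap.2 ⟨(fun φ => φ i) ⁻¹' {0}ᶜ,
    (isOpen_compl_singleton.preimage (continuous_apply i)).mem_nhds hxi, fun _ hy => hiV hy⟩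

namespace CompactlySupportedContinuousMap

variable {X E : Type*} [TopologicalSpace X] [PseudoMetricSpace E] [Zero E]

noncomputable def compOrbit (G : Type*) [Group G] [TopologicalSpace G] [MulAction G X]
    [ContinuousSMul G X] (f : C_c(X, E)) (x : X) : G →ᵇ E :=
  f.toBoundedContinuousFunction.compContinuous ⟨(· • x), by fun_prop⟩

variable {G : Type*} [Group G] [TopologicalSpace G] [MulAction G X] [ContinuousSMul G X]

@[simp]
theorem compOrbit_apply (f : C_c(X, E)) (x : X) (g : G) : f.compOrbit G x g = f (g • x) :=
  rfl

theorem dist_compOrbit_smul (f : C_c(X, E)) (g : G) (x y : X) :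
    dist (f.compOrbit G (g • x)) (f.compOrbit G (g • y)) =
      dist (f.compOrbit G x) (f.compOrbit G y) := by
  refine le_antisymm ((BoundedContinuousFunction.dist_le dist_nonneg).2 fun h => ?_)
    ((BoundedContinuousFunction.dist_le dist_nonneg).2 fun h => ?_)
  · simpa [mul_smul] using BoundedContinuousFunction.dist_coe_le_dist
      (f := f.compOrbit G x) (g := f.compOrbit G y) (h * g)
  · simpa [mul_smul] using BoundedContinuousFunction.dist_coe_le_dist
      (f := f.compOrbit G (g • x)) (g := f.compOrbit G (g • y)) (h * g⁻¹)

theorem tendstoUniformly_comp_smul [WeaklyLocallyCompactSpace X]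
    (hproper : IsProperMap fun p : G × X => (p.1 • p.2, p.2)) (f : C_c(X, E)) (x : X) :
    TendstoUniformly (fun y (g : G) => f (g • y)) (fun g => f (g • x)) (𝓝 x) := by
  intro u hu
  obtain ⟨C, hCc, hC⟩ := exists_compact_mem_nhds x
  -- for `g ∉ T`, `f (g • y) = 0` whenever `y ∈ C`
  set T : Set G := Prod.fst '' ((fun p : G × X => (p.1 • p.2, p.2)) ⁻¹' (tsupport f ×ˢ C))
  have hT : IsCompact T :=
    (hproper.isCompact_preimage (f.hasCompactSupport.prod hCc)).image continuous_fst
  obtain ⟨V, hV, hVT⟩ := hT.mem_uniformity_of_prod (f := fun y (g : G) => f (g • y))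
    (by fun_prop) (mem_univ x) (symm_le_uniformity hu)
  rw [nhdsWithin_univ] at hV
  filter_upwards [hV, hC] with y hyV hyC g
  by_cases hg : g ∈ T
  · exact hVT y hyV g hg
  · have hvanish {z : X} (hz : z ∈ C) : f (g • z) = 0 :=
      image_eq_zero_of_notMem_tsupport fun h => hg ⟨(g, z), ⟨h, hz⟩, rfl⟩
    simpa [hvanish hyC, hvanish (mem_of_mem_nhds hC)] using refl_mem_uniformity hu

theorem continuous_compOrbit [WeaklyLocallyCompactSpace X]
    (hproper : IsProperMap fun p : G × X => (p.1 • p.2, p.2)) (f : C_c(X, E)) :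
    Continuous (f.compOrbit G) :=
  continuous_iff_continuousAt.2 fun x => BoundedContinuousFunction.tendsto_iff_tendstoUniformly.2
    (tendstoUniformly_comp_smul hproper f x)

theorem isInducing_pi_compOrbit [WeaklyLocallyCompactSpace X] [T1Space E]
    (hproper : IsProperMap fun p : G × X => (p.1 • p.2, p.2)) {ι : Type*} {F : ι → C_c(X, E)}
    (hF : IsTopologicalBasis (range fun i => support (F i))) :
    IsInducing fun x i => (F i).compOrbit G x := by
  refine IsInducing.of_comp (g := fun φ i => φ i 1)
    (continuous_pi fun i => (F i).continuous_compOrbit hproper)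
    (continuous_pi fun i => (continuous_eval_const 1).comp (continuous_apply i)) ?_
  simpa [Function.comp_def] using
    isInducing_pi_of_isTopologicalBasis_support (fun i => (F i).continuous) hF

end CompactlySupportedContinuousMap

open CompactlySupportedContinuousMap

theorem exists_invariant_metric_of_proper_action_general
    {G X : Type*} [Group G] [TopologicalSpace G]
    [TopologicalSpace X] [LocallyCompactSpace X] [SigmaCompactSpace X]
    [TopologicalSpace.MetrizableSpace X]
    [MulAction G X] [ContinuousSMul G X]
    (hproper : IsProperMap (fun p : G × X => (p.1 • p.2, p.2))) :
    ∃ m : MetricSpace X,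
      m.toUniformSpace.toTopologicalSpace = ‹TopologicalSpace X› ∧
      ∀ (g : G) (x y : X), m.dist (g • x) (g • y) = m.dist x y := by
  have : SecondCountableTopology X := by
    let := metrizableSpaceMetric X
    exact EMetric.secondCountable_of_sigmaCompact X
  obtain ⟨ι, _, F, hF⟩ := exists_countable_compactlySupported_support_basis X
  let Φ : X → ι → G →ᵇ ℝ := fun x i => (F i).compOrbit G x
  have hΦ : IsEmbedding Φ := (isInducing_pi_compOrbit hproper hF).isEmbedding
  let := Encodable.ofCountable ι
  let : MetricSpace (ι → G →ᵇ ℝ) := PiCountable.metricSpace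
  refine ⟨hΦ.comapMetricSpace Φ, rfl, fun g x y => ?_⟩
  show dist (Φ (g • x)) (Φ (g • y)) = dist (Φ x) (Φ y)
  simp only [PiCountable.dist_eq_tsum, Φ, dist_compOrbit_smul]

/-- Let `G` be a locally compact Hausdorff topological group acting
properly and continuously on a locally compact, σ-compact, metrizable topological space
`X`. Then there exists a distance function on `X` inducing the topology of `X` that is
`G`-invariant: `d (g • x) (g • y) = d x y` for all `g : G` and `x y : X`. -/
theorem exists_invariant_metric_of_proper_action
    {G X : Type*} [Group G] [TopologicalSpace G] [IsTopologicalGroup G]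
    [LocallyCompactSpace G] [T2Space G]
    [TopologicalSpace X] [LocallyCompactSpace X] [SigmaCompactSpace X]
    [TopologicalSpace.MetrizableSpace X]
    [MulAction G X] [ContinuousSMul G X]
    (hproper : IsProperMap (fun p : G × X => (p.1 • p.2, p.2))) :
    ∃ m : MetricSpace X,
      m.toUniformSpace.toTopologicalSpace = ‹TopologicalSpace X› ∧
      ∀ (g : G) (x y : X), m.dist (g • x) (g • y) = m.dist x y :=
  exists_invariant_metric_of_proper_action_general hproper
end

section
/- Let X be a proper metric space (i.e. all closed balls of X are compact). Endow the group Isom(X) of surjective isometries of X onto itself with the compact-open topology. Then the natural action of Isom(X) on X is a proper action: the map Isom(X) × X → X × X, (φ, x) ↦ (φ(x), x), is continuous and proper. -/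
/-!
A surjective isometry `φ` of `X` moving a base point `x₀` by at most `r` sends every point `x`
into the closed ball of radius `dist x x₀ + r` about `x₀`, and all such maps are `1`-Lipschitz;
since closed balls of `X` are compact, Arzelà–Ascoli makes the set of these isometries, viewed
in `C(X, X)`, relatively compact. It is in fact compact: record each `φ` as the pair `(φ, φ⁻¹)`,
and note that `φ⁻¹` moves `x₀` by the same distance and that `φ ∘ φ⁻¹ = id` is a closed
condition, composition being continuous on `C(X, X)` for locally compact `X`. A compact set of
pairs `(φ x, x)` forces `x` into a ball and `φ x₀` into a ball, hence has compact preimage.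
-/

/-- The compact-open topology on the group `X ≃ᵢ X` of surjective isometries of a metric
space `X` onto itself, induced from the compact-open topology on continuous maps `C(X, X)`
via the natural inclusion. -/
noncomputable instance isometryEquivCompactOpen (X : Type*) [MetricSpace X] :
    TopologicalSpace (X ≃ᵢ X) :=
  TopologicalSpace.induced
    (fun φ : X ≃ᵢ X => (⟨φ, φ.continuous⟩ : C(X, X))) ContinuousMap.compactOpen

open Set Metric Topology

lemma isClosed_setOf_isometry {α β : Type*} [PseudoMetricSpace α] [PseudoMetricSpace β] :
    IsClosed {f : α → β | Isometry f} := by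
  simp only [isometry_iff_dist_eq, ofPred_forall]
  exact isClosed_iInter fun a => isClosed_iInter fun b =>
    isClosed_eq ((continuous_apply a).dist (continuous_apply b)) continuous_const

lemma Isometry.dist_apply_le {α β : Type*} [PseudoMetricSpace α] [PseudoMetricSpace β]
    {f : α → β} (hf : Isometry f) {x₀ : α} {y₀ : β} {r : ℝ} (hr : dist (f x₀) y₀ ≤ r) (x : α) :
    dist (f x) y₀ ≤ dist x x₀ + r :=
  calc dist (f x) y₀ ≤ dist (f x) (f x₀) + dist (f x₀) y₀ := dist_triangle _ _ _
    _ ≤ dist x x₀ + r := by rw [hf.dist_eq]; gcongr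

lemma isCompact_setOf_isometry_dist_le {α β : Type*} [PseudoMetricSpace α] [MetricSpace β]
    [ProperSpace β] (x₀ : α) (y₀ : β) (r : ℝ) :
    IsCompact {f : α → β | Isometry f ∧ dist (f x₀) y₀ ≤ r} :=
  (isCompact_univ_pi fun x => isCompact_closedBall y₀ (dist x x₀ + r)).of_isClosed_subset
    (isClosed_setOf_isometry.inter (isClosed_le
      ((continuous_apply x₀).dist continuous_const) continuous_const))
    fun _ ⟨hf, hr⟩ x _ => hf.dist_apply_le hr x

lemma ContinuousMap.isCompact_setOf_isometry_dist_le {α β : Type*} [PseudoMetricSpace α]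
    [MetricSpace β] [ProperSpace β] (x₀ : α) (y₀ : β) (r : ℝ) :
    IsCompact {f : C(α, β) | Isometry f ∧ dist (f x₀) y₀ ≤ r} := by
  apply ArzelaAscoli.isCompact_of_equicontinuous
  · convert _root_.isCompact_setOf_isometry_dist_le x₀ y₀ r
    ext f
    exact ⟨fun ⟨g, hg, hgf⟩ => hgf ▸ hg, fun hf => ⟨⟨f, hf.1.continuous⟩, hf, rfl⟩⟩
  · exact (LipschitzWith.uniformEquicontinuous _ 1 fun f => f.2.1.lipschitz).equicontinuous

section IsometryEquiv

variable {X : Type*} [MetricSpace X]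

lemma isInducing_isometryEquiv_toContinuousMap :
    IsInducing (fun φ : X ≃ᵢ X => (⟨φ, φ.continuous⟩ : C(X, X))) :=
  ⟨rfl⟩

lemma continuous_isometryEquiv_eval [LocallyCompactSpace X] :
    Continuous fun p : (X ≃ᵢ X) × X => p.1 p.2 :=
  (continuous_eval : Continuous fun p : C(X, X) × X => p.1 p.2).comp <|
    (isInducing_isometryEquiv_toContinuousMap.continuous.comp continuous_fst).prodMk
      continuous_snd

lemma isCompact_setOf_isometryEquiv_dist_le [ProperSpace X] (x₀ : X) (r : ℝ) :
    IsCompact {φ : X ≃ᵢ X | dist (φ x₀) x₀ ≤ r} := by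
  set K := {f : C(X, X) | Isometry f ∧ dist (f x₀) x₀ ≤ r}
  have hK : IsCompact K := ContinuousMap.isCompact_setOf_isometry_dist_le x₀ x₀ r
  have hinverses : IsCompact ((K ×ˢ K) ∩ {p | p.1.comp p.2 = ContinuousMap.id X}) :=
    (hK.prod hK).inter_right <|
      isClosed_eq (ContinuousMap.continuous_comp'.comp continuous_swap) continuous_const
  rw [isInducing_isometryEquiv_toContinuousMap.isCompact_iff]
  convert hinverses.image continuous_fst
  ext f
  constructor
  · rintro ⟨φ, hφ, rfl⟩
    have hφ_symm : dist (φ.symm x₀) x₀ ≤ r := by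
      rwa [← φ.dist_eq, φ.apply_symm_apply, dist_comm]
    exact ⟨(⟨φ, φ.continuous⟩, ⟨φ.symm, φ.symm.continuous⟩),
      ⟨⟨⟨φ.isometry, hφ⟩, φ.symm.isometry, hφ_symm⟩, ContinuousMap.ext φ.apply_symm_apply⟩, rfl⟩
  · rintro ⟨⟨f, g⟩, ⟨⟨⟨hf, hfr⟩, -⟩, hfg⟩, rfl⟩
    exact ⟨IsometryEquiv.mk' f g (fun y => congr($hfg y)) hf, hfr, rfl⟩

end IsometryEquiv

/-- Let `X` be a proper metric space (all closed balls are compact).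
Endow the group `Isom(X) = X ≃ᵢ X` of surjective isometries of `X` onto itself with the
compact-open topology. Then the natural action of `Isom(X)` on `X` is a proper action:
the map `Isom(X) × X → X × X`, `(φ, x) ↦ (φ x, x)`, is continuous and proper. -/
theorem isProperMap_isometryEquiv_smul (X : Type*) [MetricSpace X] [ProperSpace X] :
    IsProperMap (fun p : (X ≃ᵢ X) × X => (p.1 p.2, p.2)) := by
  have hcont : Continuous fun p : (X ≃ᵢ X) × X => (p.1 p.2, p.2) :=
    continuous_isometryEquiv_eval.prodMk continuous_snd
  refine isProperMap_iff_isCompact_preimage.2 ⟨hcont, fun K hK => ?_⟩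
  rcases K.eq_empty_or_nonempty with rfl | ⟨⟨-, x₀⟩, -⟩
  · simp
  obtain ⟨R, hR⟩ := hK.isBounded.subset_closedBall (x₀, x₀)
  rw [← closedBall_prod_same] at hR
  have hsub : (fun p : (X ≃ᵢ X) × X => (p.1 p.2, p.2)) ⁻¹' K ⊆
      {φ : X ≃ᵢ X | dist (φ x₀) x₀ ≤ R + R} ×ˢ closedBall x₀ R := by
    rintro ⟨φ, x⟩ hφx
    obtain ⟨hφx_R, hx_R⟩ : dist (φ x) x₀ ≤ R ∧ dist x x₀ ≤ R := hR hφx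
    refine ⟨?_, hx_R⟩
    calc dist (φ x₀) x₀ ≤ dist x₀ x + R := φ.isometry.dist_apply_le hφx_R x₀
      _ ≤ R + R := by rw [dist_comm]; gcongr
  exact ((isCompact_setOf_isometryEquiv_dist_le x₀ (R + R)).prod
    (isCompact_closedBall x₀ R)).of_isClosed_subset (hK.isClosed.preimage hcont) hsub
end

section
/- Let X be a locally compact, σ-compact, metrizable topological space with the property that for every distance function d on X inducing the topology of X, the group of surjective isometries of (X, d) is finite ('few symmetries'). If G is a locally compact Hausdorff topological group acting properly, continuously, and faithfully on X, then G is a finite group. -/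
/-!
A `G`-invariant metric inducing the topology of `X` makes `G`, acting faithfully, a subgroup of
the finite isometry group. To build one, start from a compatible metric `d` in which points far
out are close to each other (the metric of the one-point compactification, metrizable as `X` is
second countable), and take `D x y = ⨆ g, d (g • x) (g • y)`. Then `d ≤ D`, and properness makes
`D` continuous: for `y` near `x`, only a compact set of `g` keeps `g • x` or `g • y` away from
infinity.
-/

open Set Filter Topology Metric Pointwise
open scoped OnePoint

namespace OnePoint

variable {X : Type*} [TopologicalSpace X]

instance secondCountableTopology [SecondCountableTopology X] [LocallyCompactSpace X]
    [T2Space X] : SecondCountableTopology (OnePoint X) := by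
  obtain ⟨b, hbc, -, hb⟩ := TopologicalSpace.exists_countable_basis X
  let K : CompactExhaustion X := default
  refine (TopologicalSpace.isTopologicalBasis_of_isOpen_of_nhds
    (s := image (↑) '' b ∪ range fun n => ((↑) '' K n)ᶜ) ?_ ?_).secondCountableTopology
    ((hbc.image _).union (countable_range _))
  · rintro _ (⟨u, hu, rfl⟩ | ⟨n, rfl⟩)
    · exact isOpen_image_coe.2 (hb.isOpen hu)
    · exact isOpen_compl_image_coe.2 ⟨(K.isCompact n).isClosed, K.isCompact n⟩
  · intro a U haU hU
    induction a using OnePoint.rec with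
    | infty =>
      obtain ⟨n, hn⟩ := K.exists_superset_of_isCompact ((isOpen_iff_of_mem haU).1 hU).2
      refine ⟨_, Or.inr ⟨n, rfl⟩, infty_notMem_image_coe, fun a ha => ?_⟩
      induction a using OnePoint.rec with
      | infty => exact haU
      | coe x => by_contra hx; exact ha (mem_image_of_mem _ (hn hx))
    | coe x =>
      obtain ⟨v, hv, hxv, hvU⟩ := hb.exists_subset_of_mem_open haU (hU.preimage continuous_coe)
      exact ⟨_, Or.inl (mem_image_of_mem _ hv), mem_image_of_mem _ hxv, image_subset_iff.2 hvU⟩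

end OnePoint

section SupDist

variable (G : Type*) {X : Type*} [Group G] [MetricSpace X] [MulAction G X]

noncomputable def supDist (x y : X) : ℝ := ⨆ g : G, dist (g • x) (g • y)

variable {G}

lemma bddAbove_range_dist_smul [BoundedSpace X] (x y : X) :
    BddAbove (range fun g : G => dist (g • x) (g • y)) :=
  ⟨diam (univ : Set X), forall_mem_range.2 fun _ =>
    dist_le_diam_of_mem (Bornology.isBounded_univ.2 ‹_›) (mem_univ _) (mem_univ _)⟩

lemma dist_le_supDist [BoundedSpace X] (x y : X) : dist x y ≤ supDist G x y :=
  calc dist x y = dist ((1 : G) • x) ((1 : G) • y) := by simp only [one_smul]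
    _ ≤ supDist G x y := le_ciSup (bddAbove_range_dist_smul x y) 1

lemma supDist_self (x : X) : supDist G x x = 0 := by
  simp [supDist]

lemma supDist_comm (x y : X) : supDist G x y = supDist G y x := by
  simp only [supDist, dist_comm]

lemma supDist_triangle [BoundedSpace X] (x y z : X) :
    supDist G x z ≤ supDist G x y + supDist G y z :=
  ciSup_le fun g => (dist_triangle _ (g • y) _).trans <|
    add_le_add (le_ciSup (bddAbove_range_dist_smul x y) g)
      (le_ciSup (bddAbove_range_dist_smul y z) g)

lemma supDist_smul (h : G) (x y : X) : supDist G (h • x) (h • y) = supDist G x y := by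
  simp only [supDist, smul_smul]
  exact (Equiv.mulRight h).iSup_comp (g := fun g => dist (g • x) (g • y))

variable [TopologicalSpace G] [ContinuousSMul G X] [ProperSMul G X] [LocallyCompactSpace X]

lemma eventually_supDist_lt
    (hsmall : ∀ ε > 0, ∃ K : Set X, IsCompact K ∧ ∀ a ∉ K, ∀ b ∉ K, dist a b < ε)
    (x : X) {ε : ℝ} (hε : 0 < ε) :
    ∀ᶠ y in 𝓝 x, supDist G x y < ε := by
  obtain ⟨K, hK, hKε⟩ := hsmall (ε / 2) (half_pos hε)
  obtain ⟨Q, hQ, hQx⟩ := exists_compact_mem_nhds x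
  have hnear : ∀ᶠ y in 𝓝 x, ∀ g ∈ {g : G | (g • Q ∩ K).Nonempty},
      dist (g • x) (g • y) < ε / 2 :=
    (ProperSMul.isCompact_setOfPred_inter_nonempty hQ hK).eventually_forall_of_forall_eventually
      fun g _ => by
        have hcont : Continuous fun p : X × G => dist (p.2 • x) (p.2 • p.1) := by fun_prop
        exact hcont.continuousAt.eventually_lt continuousAt_const (by simpa using half_pos hε)
  filter_upwards [hQx, hnear] with y hyQ hy
  refine (ciSup_le fun g => ?_).trans_lt (half_lt_self hε)
  by_cases hg : (g • Q ∩ K).Nonempty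
  · exact (hy g hg).le
  · exact (hKε _ (fun h => hg ⟨_, smul_mem_smul_set (mem_of_mem_nhds hQx), h⟩)
      _ (fun h => hg ⟨_, smul_mem_smul_set hyQ, h⟩)).le

lemma isOpen_iff_forall_supDist_lt [BoundedSpace X]
    (hsmall : ∀ ε > 0, ∃ K : Set X, IsCompact K ∧ ∀ a ∉ K, ∀ b ∉ K, dist a b < ε) (s : Set X) :
    IsOpen s ↔ ∀ x ∈ s, ∃ ε > 0, ∀ y, supDist G x y < ε → y ∈ s := by
  refine ⟨fun hs x hx => ?_, fun hs => isOpen_iff_mem_nhds.2 fun x hx => ?_⟩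
  · obtain ⟨ε, hε, hball⟩ := Metric.isOpen_iff.1 hs x hx
    exact ⟨ε, hε, fun y hy => hball (mem_ball'.2 ((dist_le_supDist x y).trans_lt hy))⟩
  · obtain ⟨ε, hε, hεs⟩ := hs x hx
    exact (eventually_supDist_lt hsmall x hε).mono hεs

end SupDist

theorem exists_metricSpace_isometric_smul {X : Type*} [TopologicalSpace X]
    [LocallyCompactSpace X] [SigmaCompactSpace X] [TopologicalSpace.MetrizableSpace X]
    (G : Type*) [Group G] [TopologicalSpace G] [MulAction G X] [ContinuousSMul G X]
    [ProperSMul G X] :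
    ∃ m : MetricSpace X, m.toUniformSpace.toTopologicalSpace = ‹TopologicalSpace X› ∧
      ∀ (g : G) (x y : X), m.dist (g • x) (g • y) = m.dist x y := by
  have : SecondCountableTopology X := by
    let := TopologicalSpace.metrizableSpaceMetric X
    infer_instance
  let : MetricSpace (OnePoint X) := TopologicalSpace.metrizableSpaceMetric _
  let : MetricSpace X := OnePoint.isOpenEmbedding_coe.isEmbedding.comapMetricSpace _
  have : BoundedSpace X := by
    obtain ⟨C, hC⟩ := boundedSpace_iff.1 (inferInstance : BoundedSpace (OnePoint X))
    exact boundedSpace_iff.2 ⟨C, fun a b => hC a b⟩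
  have hsmall : ∀ ε > 0, ∃ K : Set X, IsCompact K ∧ ∀ a ∉ K, ∀ b ∉ K, dist a b < ε := by
    intro ε hε
    obtain ⟨K, ⟨-, hK⟩, hKε⟩ := hasBasis_coclosedCompact.mem_iff.1
      (OnePoint.tendsto_coe_infty (X := X) (ball_mem_nhds ∞ (half_pos hε)))
    refine ⟨K, hK, fun a ha b hb => ?_⟩
    calc dist a b ≤ dist (a : OnePoint X) ∞ + dist ∞ (b : OnePoint X) :=
          dist_triangle (a : OnePoint X) ∞ b
      _ < ε / 2 + ε / 2 := add_lt_add (hKε ha) (dist_comm (b : OnePoint X) ∞ ▸ hKε hb)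
      _ = ε := add_halves ε
  exact ⟨.ofDistTopology (supDist G) supDist_self supDist_comm supDist_triangle
    (isOpen_iff_forall_supDist_lt hsmall)
    fun x y h => dist_le_zero.1 (h ▸ dist_le_supDist x y), rfl, supDist_smul⟩

theorem finite_of_proper_action_on_few_symmetries_general
    {X : Type*} [TopologicalSpace X] [LocallyCompactSpace X] [SigmaCompactSpace X]
    [TopologicalSpace.MetrizableSpace X]
    (hfew : ∀ m : MetricSpace X, m.toUniformSpace.toTopologicalSpace = ‹TopologicalSpace X› →
      Finite {f : X → X // Function.Surjective f ∧
        ∀ x y : X, m.dist (f x) (f y) = m.dist x y})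
    {G : Type*} [Group G] [TopologicalSpace G]
    [MulAction G X] [ContinuousSMul G X]
    (hproper : IsProperMap (fun p : G × X => (p.1 • p.2, p.2)))
    (hfaithful : ∀ g : G, (∀ x : X, g • x = x) → g = 1) :
    Finite G := by
  have : ProperSMul G X := ⟨hproper⟩
  have : FaithfulSMul G X := ⟨fun h => inv_mul_eq_one.1 <|
    hfaithful _ fun x => by rw [mul_smul, ← h, inv_smul_smul]⟩
  obtain ⟨m, hm, hsmul⟩ := exists_metricSpace_isometric_smul (X := X) G
  have := hfew m hm
  exact Finite.of_injective (fun g : G => (⟨(g • ·), MulAction.surjective g, hsmul g⟩ :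
    {f : X → X // Function.Surjective f ∧ ∀ x y : X, m.dist (f x) (f y) = m.dist x y}))
    fun g g' h => smul_left_injective' (congrArg Subtype.val h)

/-- Let `X` be a locally compact, σ-compact, metrizable topological
space with `few symmetries`: for every distance function on `X` inducing the topology of
`X`, the group of surjective isometries of `X` is finite. If `G` is a locally compact
Hausdorff topological group acting properly, continuously and faithfully on `X`, then `G`
is a finite group. -/
theorem finite_of_proper_action_on_few_symmetries
    {X : Type*} [TopologicalSpace X] [LocallyCompactSpace X] [SigmaCompactSpace X]
    [TopologicalSpace.MetrizableSpace X]
    (hfew : ∀ m : MetricSpace X, m.toUniformSpace.toTopologicalSpace = ‹TopologicalSpace X› →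
      Finite {f : X → X // Function.Surjective f ∧
        ∀ x y : X, m.dist (f x) (f y) = m.dist x y})
    {G : Type*} [Group G] [TopologicalSpace G] [IsTopologicalGroup G]
    [LocallyCompactSpace G] [T2Space G]
    [MulAction G X] [ContinuousSMul G X]
    (hproper : IsProperMap (fun p : G × X => (p.1 • p.2, p.2)))
    (hfaithful : ∀ g : G, (∀ x : X, g • x = x) → g = 1) :
    Finite G :=
  finite_of_proper_action_on_few_symmetries_general hfew hproper hfaithful
end

section
/- Let p : E → X be a covering map, where X is connected and locally path-connected and E is connected. Let φ : ℝ × X → X be a continuous action of the additive group ℝ on X. Then there exists a continuous action φ̃ : ℝ × E → E of ℝ on E such that p(φ̃(t, e)) = φ(t, p(e)) for all t ∈ ℝ and e ∈ E. -/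
/-!
Lifting the homotopy `(s, (t, e)) ↦ φ (s * t, p e)` on `[0, 1] × (ℝ × E)`, which starts at the
point `p e` for every `t`, from the initial lift `e` and evaluating at `s = 1` gives a continuous
lift `ψ` of `(t, e) ↦ φ (t, p e)` with `ψ (0, e) = e`. For fixed `t` and `e`, the curves
`s ↦ ψ (s, ψ (t, e))` and `s ↦ ψ (s + t, e)` both lift `s ↦ φ (s + t, p e)` and start at the
same point, so they agree by uniqueness of lifts along the connected line.
-/

open unitInterval

namespace IsCoveringMap

variable {E X A : Type*} [TopologicalSpace E] [TopologicalSpace X] [TopologicalSpace A]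
  {p : E → X}

theorem exists_lift_of_real_prod (hp : IsCoveringMap p) (F : C(ℝ × A, X)) (f : C(A, E))
    (hF : ∀ a, F (0, a) = p (f a)) :
    ∃ G : C(ℝ × A, E), p ∘ G = F ∧ ∀ a, G (0, a) = f a := by
  let H : C(I × (ℝ × A), X) := F.comp ⟨fun z => ((z.1 : ℝ) * z.2.1, z.2.2), by fun_prop⟩
  have H_0 : ∀ z : ℝ × A, H (0, z) = p (f z.2) := fun z => by simp [H, hF]
  let L := hp.liftHomotopy H (f.comp .snd) H_0
  have L_lifts (z : I × (ℝ × A)) : p (L z) = F (z.1 * z.2.1, z.2.2) :=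
    congr_fun (hp.liftHomotopy_lifts H _ H_0) z
  refine ⟨L.comp ⟨fun z => (1, z), by fun_prop⟩, funext fun z => by simp [L_lifts], fun a => ?_⟩
  have L_const : L (1, (0, a)) = L (0, (0, a)) :=
    hp.const_of_comp (g := fun s : I => L (s, (0, a))) (by fun_prop) (by simp [L_lifts]) 1 0
  exact L_const.trans (hp.liftHomotopy_zero H _ H_0 (0, a))

theorem map_add_of_lift {M : Type*} [AddMonoid M] [TopologicalSpace M] [ContinuousAdd M]
    [PreconnectedSpace M] (hp : IsCoveringMap p) {φ : M × X → X} {ψ : M × E → E}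
    (hφadd : ∀ s t x, φ (s, φ (t, x)) = φ (s + t, x)) (hψ : Continuous ψ)
    (hψzero : ∀ e, ψ (0, e) = e) (hψp : ∀ t e, p (ψ (t, e)) = φ (t, p e)) (s t : M) (e : E) :
    ψ (s, ψ (t, e)) = ψ (s + t, e) := by
  have h := hp.eq_of_comp_eq (g₁ := fun s => ψ (s, ψ (t, e))) (g₂ := fun s => ψ (s + t, e))
    (by fun_prop) (by fun_prop) (funext fun s => by simp [hψp, hφadd]) 0 (by simp [hψzero])
  exact congr_fun h s

end IsCoveringMap

theorem exists_lift_real_action_of_coveringMap_general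
    {E X : Type*} [TopologicalSpace E] [TopologicalSpace X]
    (p : E → X) (hp : IsCoveringMap p)
    (φ : ℝ × X → X) (hφcont : Continuous φ)
    (hφzero : ∀ x : X, φ (0, x) = x)
    (hφadd : ∀ (s t : ℝ) (x : X), φ (s, φ (t, x)) = φ (s + t, x)) :
    ∃ ψ : ℝ × E → E, Continuous ψ ∧
      (∀ e : E, ψ (0, e) = e) ∧
      (∀ (s t : ℝ) (e : E), ψ (s, ψ (t, e)) = ψ (s + t, e)) ∧
      (∀ (t : ℝ) (e : E), p (ψ (t, e)) = φ (t, p e)) := by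
  obtain ⟨ψ, hψp, hψzero⟩ := hp.exists_lift_of_real_prod
    ⟨fun z : ℝ × E => φ (z.1, p z.2), hφcont.comp (continuous_fst.prodMk
      (hp.continuous.comp continuous_snd))⟩ (.id E)
    (fun e => hφzero (p e))
  have hψp' (t : ℝ) (e : E) : p (ψ (t, e)) = φ (t, p e) := congr_fun hψp (t, e)
  exact ⟨ψ, ψ.continuous, hψzero, hp.map_add_of_lift hφadd ψ.continuous hψzero hψp', hψp'⟩

/-- Let `p : E → X` be a covering map, where `X` is connected and
locally path-connected and `E` is connected. Let `φ : ℝ × X → X` be a continuous action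
of the additive group `ℝ` on `X`. Then there exists a continuous action `ψ : ℝ × E → E`
of `ℝ` on `E` such that `p (ψ (t, e)) = φ (t, p e)` for all `t : ℝ` and `e : E`. -/
theorem exists_lift_real_action_of_coveringMap
    {E X : Type*} [TopologicalSpace E] [TopologicalSpace X]
    [ConnectedSpace X] [LocallyPathConnectedSpace X] [ConnectedSpace E]
    (p : E → X) (hp : IsCoveringMap p)
    (φ : ℝ × X → X) (hφcont : Continuous φ)
    (hφzero : ∀ x : X, φ (0, x) = x)
    (hφadd : ∀ (s t : ℝ) (x : X), φ (s, φ (t, x)) = φ (s + t, x)) :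
    ∃ ψ : ℝ × E → E, Continuous ψ ∧
      (∀ e : E, ψ (0, e) = e) ∧
      (∀ (s t : ℝ) (e : E), ψ (s, ψ (t, e)) = ψ (s + t, e)) ∧
      (∀ (t : ℝ) (e : E), p (ψ (t, e)) = φ (t, p e)) :=
  exists_lift_real_action_of_coveringMap_general p hp φ hφcont hφzero hφadd
end
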